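/- Let Λ be a lattice (full-rank ℤ-submodule) in a positive definite rational quadratic space (V,Q) with Q(Λ) ⊆ ℤ. Then the stabilizer Aut(Λ) = {g ∈ O(Q) : g(Λ) = Λ} is a finite group. -/

import Mathlib

/-!
Diagonalising `Q` over `ℚ` as `∑ wᵢ yᵢ²` with all `wᵢ > 0`, weighted Cauchy–Schwarz bounds the
square of every linear functional by a constant multiple of `Q`. Hence lattice points of bounded
norm have bounded integer coordinates, so there are finitely many of them. An isometry preserving
the lattice is determined by the images of the basis vectors `bᵢ`, each of which is a lattice point
of norm `Q bᵢ`; so there are finitely many such isometries.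
-/

open QuadraticMap Finset

theorem QuadraticMap.PosDef.of_isometryEquiv {R M M' N : Type*} [CommSemiring R]
    [AddCommMonoid M] [AddCommMonoid M'] [AddCommMonoid N] [PartialOrder N]
    [Module R M] [Module R M'] [Module R N] {Q : QuadraticMap R M N} {Q' : QuadraticMap R M' N}
    (hQ : Q.PosDef) (e : Q.IsometryEquiv Q') : Q'.PosDef := fun y hy => by
  simpa [e.symm.map_app] using hQ (e.symm y) (by simpa using hy)

section OrderedField

variable {K V : Type*} [Field K] [LinearOrder K] [IsStrictOrderedRing K]
  [AddCommGroup V] [Module K V]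

theorem QuadraticMap.PosDef.weight_pos {ι : Type*} [Fintype ι] [DecidableEq ι] {w : ι → K}
    (hw : (weightedSumSquares K w).PosDef) (i : ι) : 0 < w i := by
  simpa [weightedSumSquares_apply, Pi.single_apply] using hw (Pi.single i 1) (by simp)

theorem QuadraticMap.exists_sq_le_mul_weightedSumSquares {ι : Type*} [Fintype ι] [DecidableEq ι] {w : ι → K}
    (hw : ∀ i, 0 < w i) (f : (ι → K) →ₗ[K] K) :
    ∃ D, 0 ≤ D ∧ ∀ y, f y ^ 2 ≤ D * weightedSumSquares K w y := by
  set a : ι → K := fun i => f (Pi.single i 1)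
  refine ⟨∑ i, a i ^ 2 / w i, sum_nonneg fun i _ => div_nonneg (sq_nonneg _) (hw i).le,
    fun y => ?_⟩
  have hf : f y = ∑ i, y i * a i := by
    conv_lhs => rw [pi_eq_sum_univ' y]
    simp [map_sum, a]
  -- weighted Cauchy–Schwarz, splitting `y i * a i` as `(w i * y i ^ 2) * (a i ^ 2 / w i)`
  have hcs := sum_sq_le_sum_mul_sum_of_sq_le_mul univ (r := fun i => y i * a i)
    (f := fun i => w i * y i ^ 2) (g := fun i => a i ^ 2 / w i)
    (fun i _ => mul_nonneg (hw i).le (sq_nonneg _))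
    (fun i _ => div_nonneg (sq_nonneg _) (hw i).le)
    (fun i _ => le_of_eq (by have := (hw i).ne'; field_simp))
  rw [hf, weightedSumSquares_apply, mul_comm]
  simpa only [smul_eq_mul, ← pow_two] using hcs

theorem QuadraticMap.PosDef.exists_sq_le_mul [FiniteDimensional K V] {Q : QuadraticForm K V}
    (hQ : Q.PosDef) (f : V →ₗ[K] K) : ∃ D, 0 ≤ D ∧ ∀ x, f x ^ 2 ≤ D * Q x := by
  let : Invertible (2 : K) := invertibleOfNonzero two_ne_zero
  obtain ⟨w, ⟨e⟩⟩ := Q.equivalent_weightedSumSquares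
  obtain ⟨D, hD, hfD⟩ := exists_sq_le_mul_weightedSumSquares
    ((hQ.of_isometryEquiv e).weight_pos) (f ∘ₗ e.symm.toLinearMap)
  exact ⟨D, hD, fun x => by simpa [e.map_app] using hfD (e x)⟩

end OrderedField

theorem Rat.finite_setOf_isInt_sq_le (D : ℚ) :
    {q : ℚ | q ∈ Set.range ((↑) : ℤ → ℚ) ∧ q ^ 2 ≤ D}.Finite := by
  refine ((Set.finite_Icc (-⌈D⌉) ⌈D⌉).image ((↑) : ℤ → ℚ)).subset ?_
  rintro _ ⟨⟨m, rfl⟩, hm⟩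
  have hm' : m ^ 2 ≤ ⌈D⌉ := by exact_mod_cast hm.trans (Int.le_ceil D)
  refine ⟨m, ⟨?_, ?_⟩, rfl⟩ <;> nlinarith [Int.le_self_sq m, Int.le_self_sq (-m)]

section Lattice

variable {V ι : Type*} [AddCommGroup V] [Module ℚ V] [FiniteDimensional ℚ V]
  {Q : QuadraticForm ℚ V}

theorem QuadraticMap.PosDef.finite_setOf_mem_span_le (hQ : Q.PosDef) (b : Module.Basis ι ℚ V)
    (c : ℚ) : {x | x ∈ Submodule.span ℤ (Set.range b) ∧ Q x ≤ c}.Finite := by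
  have := Module.Finite.finite_basis b
  choose D hD hcoord using fun j => hQ.exists_sq_le_mul (b.coord j)
  refine ((Set.Finite.pi fun j => Rat.finite_setOf_isInt_sq_le (D j * c)).preimage
    b.equivFun.injective.injOn).subset ?_
  rintro x ⟨hx, hxc⟩ j -
  refine ⟨?_, (hcoord j x).trans (mul_le_mul_of_nonneg_left hxc (hD j))⟩
  obtain ⟨m, hm⟩ := (b.mem_span_iff_repr_mem ℤ x).mp hx j
  exact ⟨m, by simpa using hm⟩

theorem QuadraticMap.PosDef.finite_setOf_isometry_mapsTo_span (hQ : Q.PosDef)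
    (b : Module.Basis ι ℚ V) :
    {g : V ≃ₗ[ℚ] V | (∀ x, Q (g x) = Q x) ∧
      Set.MapsTo g (Submodule.span ℤ (Set.range b)) (Submodule.span ℤ (Set.range b))}.Finite := by
  have := Module.Finite.finite_basis b
  refine ((Set.Finite.pi fun i => hQ.finite_setOf_mem_span_le b (Q (b i))).preimage
    (f := fun g i => g (b i)) fun g _ g' _ h => b.ext' (congrFun h)).subset ?_
  rintro g ⟨hgQ, hgL⟩ i -
  exact ⟨hgL (Submodule.subset_span ⟨i, rfl⟩), (hgQ (b i)).le⟩

end Lattice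

theorem lattice_automorphism_group_finite_general
    (V : Type*) [AddCommGroup V] [Module ℚ V] [FiniteDimensional ℚ V]
    (Q : QuadraticForm ℚ V) (hQ : Q.PosDef)
    (Λ : Submodule ℤ V) (n : ℕ) (b : Module.Basis (Fin n) ℚ V)
    (hΛ : Λ = Submodule.span ℤ (Set.range b)) :
    {g : V ≃ₗ[ℚ] V | (∀ x, Q (g x) = Q x) ∧
      (g '' (Λ : Set V) = (Λ : Set V))}.Finite := by
  subst hΛ
  refine (hQ.finite_setOf_isometry_mapsTo_span b).subset ?_
  rintro g ⟨hgQ, hgΛ⟩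
  exact ⟨hgQ, Set.mapsTo_iff_image_subset.mpr hgΛ.subset⟩

/-- The automorphism group of an integral lattice in a positive definite rational
quadratic space is finite. -/
theorem lattice_automorphism_group_finite
    (V : Type*) [AddCommGroup V] [Module ℚ V] [FiniteDimensional ℚ V]
    (Q : QuadraticForm ℚ V) (hQ : Q.PosDef)
    (Λ : Submodule ℤ V) (n : ℕ) (b : Module.Basis (Fin n) ℚ V)
    (hΛ : Λ = Submodule.span ℤ (Set.range b))
    (hint : ∀ x ∈ Λ, ∃ m : ℤ, Q x = (m : ℚ)) :
    {g : V ≃ₗ[ℚ] V | (∀ x, Q (g x) = Q x) ∧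
      (g '' (Λ : Set V) = (Λ : Set V))}.Finite :=
  lattice_automorphism_group_finite_general V Q hQ Λ n b hΛ
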